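/- Let f ∈ H and let p_1, …, p_n ∈ E be points whose Gram matrix A_n is positive definite. Then the Aveiro approximation f*_{A_n} equals the orthogonal projection of f onto the linear span of {h(p_1), …, h(p_n)}; in particular f − f*_{A_n} is orthogonal to h(p_j) for every j = 1, …, n. -/

import Mathlib

/-!
Write `G` for the Gram matrix of `v₁, …, vₙ`. Since `G` is Hermitian, so is `G⁻¹`, and the
inner product of `vᵢ` with `f* = ∑ⱼ ∑ₖ ⟪vⱼ, f⟫ conj (G⁻¹ⱼₖ) vₖ` collapses to
`∑ⱼ ⟪vⱼ, f⟫ (G G⁻¹)ᵢⱼ = ⟪vᵢ, f⟫`. Hence `f - f*` is orthogonal to every `vᵢ`, so to their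
span, which contains `f*` by construction.
-/

open scoped ComplexInnerProductSpace ComplexOrder

open Matrix Submodule

open scoped InnerProductSpace ComplexConjugate

namespace Aveiro

variable {𝕜 H ι : Type*} [RCLike 𝕜] [NormedAddCommGroup H] [InnerProductSpace 𝕜 H]

theorem inner_eq_zero_of_mem_span {s : Set H} {x g : H} (hs : ∀ u ∈ s, ⟪u, x⟫_𝕜 = 0)
    (hg : g ∈ span 𝕜 s) : ⟪g, x⟫_𝕜 = 0 := by
  have hle : span 𝕜 s ≤ (𝕜 ∙ x)ᗮ :=
    span_le.2 fun u hu => mem_orthogonal_singleton_iff_inner_left.2 (hs u hu)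
  exact mem_orthogonal_singleton_iff_inner_left.1 (hle hg)

variable [Fintype ι] [DecidableEq ι]

variable (𝕜) in
noncomputable def approx (v : ι → H) (f : H) : H :=
  ∑ j, ∑ k, (⟪v j, f⟫_𝕜 * conj ((gram 𝕜 v)⁻¹ j k)) • v k

theorem approx_mem_span (v : ι → H) (f : H) : approx 𝕜 v f ∈ span 𝕜 (Set.range v) :=
  sum_mem fun _ _ => sum_mem fun k _ => smul_mem _ _ (subset_span ⟨k, rfl⟩)

theorem inner_approx (v : ι → H) (hG : IsUnit (gram 𝕜 v).det) (f : H) (i : ι) :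
    ⟪v i, approx 𝕜 v f⟫_𝕜 = ⟪v i, f⟫_𝕜 := by
  have hconj : ∀ j k, conj ((gram 𝕜 v)⁻¹ j k) = (gram 𝕜 v)⁻¹ k j := fun j k =>
    (isHermitian_gram 𝕜 v).inv.apply k j
  calc ⟪v i, approx 𝕜 v f⟫_𝕜
      = ∑ j, ⟪v j, f⟫_𝕜 * ∑ k, gram 𝕜 v i k * (gram 𝕜 v)⁻¹ k j := by
        simp only [approx, inner_sum, inner_smul_right, Finset.mul_sum, hconj, gram_apply]
        exact Finset.sum_congr rfl fun j _ => Finset.sum_congr rfl fun k _ => by ring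
    _ = ∑ j, ⟪v j, f⟫_𝕜 * (1 : Matrix ι ι 𝕜) i j := by
        simp only [← mul_apply, mul_nonsing_inv _ hG]
    _ = ⟪v i, f⟫_𝕜 := by simp [one_apply]

theorem inner_sub_approx_eq_zero (v : ι → H) (hG : IsUnit (gram 𝕜 v).det) (f : H) {g : H}
    (hg : g ∈ span 𝕜 (Set.range v)) : ⟪g, f - approx 𝕜 v f⟫_𝕜 = 0 := by
  refine inner_eq_zero_of_mem_span ?_ hg
  rintro _ ⟨i, rfl⟩
  rw [inner_sub_right, inner_approx v hG, sub_self]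

end Aveiro

theorem stmt1 {H : Type*} [NormedAddCommGroup H] [InnerProductSpace ℂ H]
    {E : Type*} (h : E → H) (n : ℕ) (p : Fin n → E) (f : H)
    (A : Matrix (Fin n) (Fin n) ℂ)
    (hA : ∀ j k, A j k = ⟪h (p j), h (p k)⟫)
    (hpos : A.PosDef)
    (fstar : H)
    (hfstar : fstar = ∑ j : Fin n, ∑ k : Fin n,
      (⟪h (p j), f⟫ * (starRingEnd ℂ) (A⁻¹ j k)) • h (p k)) :
    fstar ∈ Submodule.span ℂ (Set.range fun j => h (p j)) ∧
    (∀ g ∈ Submodule.span ℂ (Set.range fun j => h (p j)), ⟪g, f - fstar⟫ = 0) ∧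
    (∀ j : Fin n, ⟪h (p j), f - fstar⟫ = 0) := by
  set v : Fin n → H := fun j => h (p j)
  have hA_gram : A = gram ℂ v := Matrix.ext hA
  have hG : IsUnit (gram ℂ v).det := hA_gram ▸ hpos.isUnit.map detMonoidHom
  have hfstar_approx : fstar = Aveiro.approx ℂ v f := by rw [hfstar, hA_gram]; rfl
  subst hfstar_approx
  exact ⟨Aveiro.approx_mem_span v f, fun g hg => Aveiro.inner_sub_approx_eq_zero v hG f hg,
    fun j => Aveiro.inner_sub_approx_eq_zero v hG f (subset_span ⟨j, rfl⟩)⟩
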